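/- arXiv:1301.7191 — 2 statements merged into one kernel-verified Lean document; each statement's English description precedes it below -/
import Mathlib

section
/- Suppose X satisfies the δ-annular decay property and u is a nonnegative β-Hölder continuous function with β > 0 and α + β ≤ δ, where α > 0. Then for fixed r > 0, the function v(x) = r^α u_{B(x,r)} satisfies |v(x) − v(y)| ≤ C d(x,y)^{α+β} ‖u‖_{C^{0,β}} for all x, y ∈ X, with C independent of r, x, y, u. -/
/-!
For `r ≤ d = d(x, y)` each average `u_{B(z,r)}` is within `N r^β` of `u z`, so the Hölder bound
on `u` alone gives `r^α |u_{B(x,r)} - u_{B(y,r)}| ≤ 3 N d^{α+β}`.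

For `d < r` both balls lie in `S = B(x, r + d)`. If `B ⊆ S` and `u` oscillates by at most `L`
on `S`, then `|u_S - u_B| ≤ 2 L (μ S - μ B) / μ S`, and `S \ B(y, r)` lies in the annulus
`B(x, r + d) \ B(x, r - d)`, whose relative measure is at most `K (2d/r)^δ` by annular decay.
With `L = N (2r)^β` this leaves `r^{α+β} (d/r)^δ ≤ d^{α+β}`, which is where `α + β ≤ δ` enters.
-/

open MeasureTheory Metric
open scoped ENNReal

namespace MeasureTheory

variable {X : Type*} [MeasurableSpace X] {μ : Measure X}

/-- Unlike `ae_restrict_of_forall_mem`, this does not need `s` to be measurable: balls need not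
be, since the σ-algebra on `X` is arbitrary. -/
theorem ae_restrict_mem_of_forall_mem {Y : Type*} [MeasurableSpace Y] {s : Set X} {t : Set Y}
    {f : X → Y} (hf : AEMeasurable f (μ.restrict s)) (ht : MeasurableSet t)
    (h : ∀ z ∈ s, f z ∈ t) : ∀ᵐ z ∂μ.restrict s, f z ∈ t := by
  have hmk : ∀ᵐ z ∂μ.restrict s, hf.mk f z ∈ t := by
    have hmeas : MeasurableSet {z | hf.mk f z ∉ t} := hf.measurable_mk ht.compl
    rw [ae_iff, Measure.restrict_apply hmeas]
    refine measure_mono_null (t := {z | f z ≠ hf.mk f z} ∩ s)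
      (fun z ⟨hz, hzs⟩ => ⟨fun hfz => hz (hfz ▸ h z hzs), hzs⟩) ?_
    exact nonpos_iff_eq_zero.1 ((Measure.le_restrict_apply _ _).trans (ae_iff.1 hf.ae_eq_mk).le)
  filter_upwards [hf.ae_eq_mk, hmk] with z hfz hz
  rwa [hfz]

theorem abs_setAverage_sub_le {s : Set X} {u : X → ℝ} {c M : ℝ} (hs0 : μ s ≠ 0) (hs : μ s ≠ ∞)
    (hu : IntegrableOn u s μ) (h : ∀ z ∈ s, |u z - c| ≤ M) :
    |(⨍ z in s, u z ∂μ) - c| ≤ M := by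
  have hmem := ae_restrict_mem_of_forall_mem hu.aemeasurable measurableSet_closedBall
    (fun z hz => mem_closedBall.2 (h z hz))
  exact mem_closedBall.1
    ((convex_closedBall c M).set_average_mem isClosed_closedBall hs0 hs hmem hu)

theorem abs_setIntegral_sub_setIntegral_le {s S : Set X} {f : X → ℝ} {L : ℝ} (hsS : s ⊆ S)
    (hS : μ S ≠ ∞) (hf : IntegrableOn f S μ) (hL : ∀ᵐ z ∂μ.restrict S, |f z| ≤ L) :
    |∫ z in S, f z ∂μ - ∫ z in s, f z ∂μ| ≤ L * (μ S - μ s).toReal := by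
  have : IsFiniteMeasure (μ.restrict S) := isFiniteMeasure_restrict.2 hS
  have hf : Integrable f (μ.restrict S) := hf
  have hle : μ.restrict s ≤ μ.restrict S := Measure.restrict_mono hsS le_rfl
  have : IsFiniteMeasure (μ.restrict s) := isFiniteMeasure_of_le _ hle
  -- `μ|S = ν + μ|s` replaces the split of `S` along the possibly non-measurable `s`.
  set ν := μ.restrict S - μ.restrict s
  have hνS : ν ≤ μ.restrict S := Measure.sub_le
  have hdiff : ∫ z in S, f z ∂μ - ∫ z in s, f z ∂μ = ∫ z, f z ∂ν := by
    conv_lhs => rw [← Measure.sub_add_cancel_of_le hle,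
      integral_add_measure (hf.mono_measure hνS) (hf.mono_measure hle)]
    ring
  have hνuniv : ν.real Set.univ = (μ S - μ s).toReal := by
    rw [measureReal_def, Measure.sub_apply MeasurableSet.univ hle, Measure.restrict_apply_univ,
      Measure.restrict_apply_univ]
  rw [hdiff, ← hνuniv]
  exact norm_integral_le_of_norm_le_const (f := f) (ae_mono hνS hL)

theorem abs_setAverage_sub_setAverage_le {s S : Set X} {u : X → ℝ} {c L : ℝ} (hsS : s ⊆ S)
    (hs0 : μ s ≠ 0) (hS : μ S ≠ ∞) (hu : IntegrableOn u S μ) (h : ∀ z ∈ S, |u z - c| ≤ L) :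
    |(⨍ z in S, u z ∂μ) - ⨍ z in s, u z ∂μ| ≤ 2 * L * (μ S - μ s).toReal / (μ S).toReal := by
  set a := ⨍ z in s, u z ∂μ
  have hs : μ s ≠ ∞ := ne_top_of_le_ne_top hS (measure_mono hsS)
  have hac : |a - c| ≤ L :=
    abs_setAverage_sub_le hs0 hs (hu.mono_set hsS) fun z hz => h z (hsS hz)
  have hua : ∀ z ∈ S, |u z - a| ≤ 2 * L := fun z hz => by
    linarith [abs_sub_le (u z) c a, abs_sub_comm a c, h z hz]
  have hbound := abs_setIntegral_sub_setIntegral_le (f := fun z => u z - a) hsS hS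
    (hu.sub (integrableOn_const hS))
    (ae_restrict_mem_of_forall_mem (hu.aemeasurable.sub_const a).abs measurableSet_Iic hua)
  have hS0 : 0 < μ.real S := ENNReal.toReal_pos (fun h0 => hs0 (measure_mono_null hsS h0)) hS
  rw [setAverage_sub_setAverage hs, sub_zero, integral_sub hu (integrableOn_const hS),
    ← measure_smul_setAverage _ hS, setIntegral_const, smul_eq_mul, smul_eq_mul, ← mul_sub,
    abs_mul, abs_of_pos hS0] at hbound
  rw [← measureReal_def, le_div_iff₀ hS0]
  linarith

end MeasureTheory

def HasAnnularDecay {X : Type*} [PseudoMetricSpace X] [MeasurableSpace X] (μ : Measure X)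
    (δ K : ℝ) : Prop :=
  ∀ (z : X) (R h : ℝ), 0 < R → 0 < h → h < R →
    μ (ball z R \ ball z (R - h)) ≤ ENNReal.ofReal (K * (h / R) ^ δ) * μ (ball z R)

theorem rpow_mul_div_rpow_le {r d γ δ : ℝ} (hd : 0 < d) (hdr : d ≤ r) (hγδ : γ ≤ δ) :
    r ^ γ * (d / r) ^ δ ≤ d ^ γ := by
  have hr : 0 < r := hd.trans_le hdr
  calc r ^ γ * (d / r) ^ δ ≤ r ^ γ * (d / r) ^ γ :=
        mul_le_mul_of_nonneg_left (Real.rpow_le_rpow_of_exponent_ge (by positivity)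
          (div_le_one_of_le₀ hdr hr.le) hγδ) (by positivity)
    _ = d ^ γ := by rw [← Real.mul_rpow hr.le (by positivity), mul_div_cancel₀ _ hr.ne']

section HolderAverage

variable {X : Type*} [PseudoMetricSpace X] [MeasurableSpace X] {μ : Measure X}
  {u : X → ℝ} {N β : ℝ}

theorem HasAnnularDecay.measure_ball_sub_measure_ball_le {δ K : ℝ} (hann : HasAnnularDecay μ δ K)
    (hK : 0 ≤ K) (hδ : 0 ≤ δ) {x y : X} {r d : ℝ} (hd : 0 < d) (hdr : d < r)
    (hxy : dist x y ≤ d) (hS : μ (ball x (r + d)) ≠ ∞) :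
    (μ (ball x (r + d)) - μ (ball y r)).toReal ≤
      K * (2 * (d / r)) ^ δ * (μ (ball x (r + d))).toReal := by
  have hsub : ball x (r + d - 2 * d) ⊆ ball y r := ball_subset_ball' (by linarith)
  have hdecay : μ (ball x (r + d)) - μ (ball y r) ≤
      ENNReal.ofReal (K * (2 * d / (r + d)) ^ δ) * μ (ball x (r + d)) :=
    le_measure_sdiff.trans <| (measure_mono (Set.sdiff_subset_sdiff_right hsub)).trans <|
      hann x (r + d) (2 * d) (by linarith) (by linarith) (by linarith)
  have hratio_nonneg : 0 ≤ 2 * d / (r + d) := div_nonneg (by linarith) (by linarith)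
  have hratio : 2 * d / (r + d) ≤ 2 * (d / r) := by
    rw [mul_div_assoc]
    gcongr <;> linarith
  calc (μ (ball x (r + d)) - μ (ball y r)).toReal
      ≤ K * (2 * d / (r + d)) ^ δ * (μ (ball x (r + d))).toReal := by
        rw [← ENNReal.toReal_ofReal (by positivity : 0 ≤ K * (2 * d / (r + d)) ^ δ),
          ← ENNReal.toReal_mul]
        exact ENNReal.toReal_mono (ENNReal.mul_ne_top ENNReal.ofReal_ne_top hS) hdecay
    _ ≤ K * (2 * (d / r)) ^ δ * (μ (ball x (r + d))).toReal := by gcongr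

variable (hball : ∀ (z : X) (s : ℝ), 0 < s → 0 < μ (ball z s) ∧ μ (ball z s) < ∞)
  (hN : 0 ≤ N) (hβ : 0 ≤ β) (hHol : ∀ z w : X, |u z - u w| ≤ N * dist z w ^ β)
  (hInt : ∀ (z : X) (s : ℝ), 0 < s → IntegrableOn u (ball z s) μ)
include hball hN hβ hHol hInt

theorem abs_setAverage_ball_sub_le {x : X} {r : ℝ} (hr : 0 < r) :
    |(⨍ z in ball x r, u z ∂μ) - u x| ≤ N * r ^ β :=
  abs_setAverage_sub_le (hball x r hr).1.ne' (hball x r hr).2.ne (hInt x r hr) fun z hz =>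
    (hHol z x).trans (by gcongr; exact (mem_ball.1 hz).le)

theorem rpow_mul_abs_setAverage_ball_sub_setAverage_ball_le_of_le {α : ℝ} (hα : 0 ≤ α) {x y : X}
    {r : ℝ} (hr : 0 < r) (hrd : r ≤ dist x y) :
    r ^ α * |(⨍ z in ball x r, u z ∂μ) - ⨍ z in ball y r, u z ∂μ| ≤
      3 * dist x y ^ (α + β) * N := by
  have hx := abs_setAverage_ball_sub_le hball hN hβ hHol hInt (x := x) hr
  have hy := abs_setAverage_ball_sub_le hball hN hβ hHol hInt (x := y) hr
  have hrβ : N * r ^ β ≤ N * dist x y ^ β := by gcongr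
  have hcompare : |(⨍ z in ball x r, u z ∂μ) - ⨍ z in ball y r, u z ∂μ| ≤
      3 * N * dist x y ^ β := by
    linarith [abs_sub_le (⨍ z in ball x r, u z ∂μ) (u x) (⨍ z in ball y r, u z ∂μ),
      abs_sub_le (u x) (u y) (⨍ z in ball y r, u z ∂μ),
      abs_sub_comm (u y) (⨍ z in ball y r, u z ∂μ), hHol x y]
  calc r ^ α * |(⨍ z in ball x r, u z ∂μ) - ⨍ z in ball y r, u z ∂μ|
      ≤ dist x y ^ α * (3 * N * dist x y ^ β) := by gcongr
    _ = 3 * dist x y ^ (α + β) * N := by rw [Real.rpow_add (hr.trans_le hrd)]; ring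

theorem abs_setAverage_ball_add_sub_setAverage_ball_le {δ K : ℝ} (hann : HasAnnularDecay μ δ K)
    (hK : 0 ≤ K) (hδ : 0 ≤ δ) {x y : X} {r d : ℝ} (hd : 0 < d) (hdr : d < r)
    (hxy : dist x y ≤ d) :
    |(⨍ z in ball x (r + d), u z ∂μ) - ⨍ z in ball y r, u z ∂μ| ≤
      2 * (N * (2 * r) ^ β) * (K * (2 * (d / r)) ^ δ) := by
  have hr : 0 < r := hd.trans hdr
  have hS := hball x (r + d) (by linarith)
  have hS0 : 0 < (μ (ball x (r + d))).toReal := ENNReal.toReal_pos hS.1.ne' hS.2.ne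
  have hosc : ∀ z ∈ ball x (r + d), |u z - u x| ≤ N * (2 * r) ^ β := fun z hz =>
    (hHol z x).trans (by gcongr; linarith [mem_ball.1 hz])
  refine (abs_setAverage_sub_setAverage_le (ball_subset_ball' (by rw [dist_comm]; linarith))
    (hball y r hr).1.ne' hS.2.ne (hInt x (r + d) (by linarith)) hosc).trans ?_
  rw [div_le_iff₀ hS0, mul_assoc _ (K * _)]
  gcongr
  exact hann.measure_ball_sub_measure_ball_le hK hδ hd hdr hxy hS.2.ne

theorem rpow_mul_abs_setAverage_ball_sub_setAverage_ball_le {α δ K : ℝ}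
    (hann : HasAnnularDecay μ δ K) (hK : 0 ≤ K) (hδ : 0 ≤ δ) (hαβ : α + β ≤ δ) {x y : X} {r : ℝ}
    (hr : 0 < r) (hd : 0 < dist x y) (hdr : dist x y < r) :
    r ^ α * |(⨍ z in ball x r, u z ∂μ) - ⨍ z in ball y r, u z ∂μ| ≤
      4 * K * 2 ^ β * 2 ^ δ * dist x y ^ (α + β) * N := by
  set d := dist x y
  have hx := abs_setAverage_ball_add_sub_setAverage_ball_le hball hN hβ hHol hInt hann hK hδ
    (x := x) (y := x) hd hdr (by simp [hd.le])
  have hy := abs_setAverage_ball_add_sub_setAverage_ball_le hball hN hβ hHol hInt hann hK hδ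
    (x := x) (y := y) hd hdr le_rfl
  calc r ^ α * |(⨍ z in ball x r, u z ∂μ) - ⨍ z in ball y r, u z ∂μ|
      ≤ r ^ α * (2 * (2 * (N * (2 * r) ^ β) * (K * (2 * (d / r)) ^ δ))) := by
        gcongr
        linarith [abs_sub_le (⨍ z in ball x r, u z ∂μ) (⨍ z in ball x (r + d), u z ∂μ)
          (⨍ z in ball y r, u z ∂μ), abs_sub_comm (⨍ z in ball x r, u z ∂μ)
          (⨍ z in ball x (r + d), u z ∂μ)]
    _ = 4 * K * 2 ^ β * 2 ^ δ * N * (r ^ (α + β) * (d / r) ^ δ) := by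
        rw [Real.mul_rpow zero_le_two hr.le, Real.mul_rpow zero_le_two (by positivity),
          Real.rpow_add hr]
        ring
    _ ≤ 4 * K * 2 ^ β * 2 ^ δ * N * d ^ (α + β) := by
        gcongr
        exact rpow_mul_div_rpow_le hd hdr.le hαβ
    _ = 4 * K * 2 ^ β * 2 ^ δ * d ^ (α + β) * N := by ring

end HolderAverage

theorem averaged_function_holder_estimate_general
    {X : Type*} [MetricSpace X] [MeasurableSpace X] (μ : Measure X)
    (hball : ∀ (z : X) (s : ℝ), 0 < s → 0 < μ (ball z s) ∧ μ (ball z s) < ∞)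
    (δ : ℝ)
    (K : ℝ) (hK : 0 < K)
    (hann : ∀ (z : X) (R h : ℝ), 0 < R → 0 < h → h < R →
      μ (ball z R \ ball z (R - h)) ≤ ENNReal.ofReal (K * (h / R) ^ δ) * μ (ball z R))
    (α β : ℝ) (hα : 0 < α) (hβ : 0 < β) (hαβ : α + β ≤ δ) :
    ∃ C > (0 : ℝ), ∀ (u : X → ℝ) (N : ℝ), 0 ≤ N →
      (∀ z : X, 0 ≤ u z) →
      (∀ z w : X, |u z - u w| ≤ N * dist z w ^ β) →
      (∀ (z : X) (s : ℝ), 0 < s → IntegrableOn u (ball z s) μ) →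
      ∀ (r : ℝ), 0 < r → ∀ (x y : X),
        |r ^ α * (⨍ z in ball x r, u z ∂μ) - r ^ α * ⨍ z in ball y r, u z ∂μ| ≤
          C * dist x y ^ (α + β) * N := by
  have hδ : 0 ≤ δ := by linarith
  refine ⟨3 + 4 * K * 2 ^ β * 2 ^ δ, by positivity, fun u N hN _ hHol hInt r hr x y => ?_⟩
  rw [← mul_sub, abs_mul, abs_of_pos (Real.rpow_pos_of_pos hr α)]
  rcases le_or_gt r (dist x y) with hrd | hdr
  · calc _ ≤ 3 * dist x y ^ (α + β) * N :=
          rpow_mul_abs_setAverage_ball_sub_setAverage_ball_le_of_le hball hN hβ.le hHol hInt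
            hα.le hr hrd
      _ ≤ _ := by gcongr; exact le_add_of_nonneg_right (by positivity)
  rcases eq_or_ne x y with rfl | hxy
  · simp only [sub_self, abs_zero, mul_zero]
    positivity
  calc _ ≤ 4 * K * 2 ^ β * 2 ^ δ * dist x y ^ (α + β) * N :=
        rpow_mul_abs_setAverage_ball_sub_setAverage_ball_le hball hN hβ.le hHol hInt hann hK.le hδ
          hαβ hr (dist_pos.2 hxy) hdr
    _ ≤ _ := by gcongr; exact le_add_of_nonneg_left (by norm_num)

/-- Under the δ-annular decay property, for a nonnegative β-Hölder
continuous `u` (Hölder seminorm at most `N`) with `0 < β`, `0 < α`, `α + β ≤ δ`,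
the function `v(x) = r^α u_{B(x,r)}` satisfies
`|v(x) − v(y)| ≤ C d(x,y)^{α+β} N` with `C` independent of `r, x, y, u`. -/
theorem averaged_function_holder_estimate
    {X : Type*} [MetricSpace X] [MeasurableSpace X] (μ : Measure X)
    (cd : ℝ≥0∞) (hcd : ∀ (z : X) (s : ℝ), 0 < s → μ (ball z (2 * s)) ≤ cd * μ (ball z s))
    (hball : ∀ (z : X) (s : ℝ), 0 < s → 0 < μ (ball z s) ∧ μ (ball z s) < ∞)
    (δ : ℝ) (hδ0 : 0 < δ) (hδ1 : δ ≤ 1)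
    (K : ℝ) (hK : 0 < K)
    (hann : ∀ (z : X) (R h : ℝ), 0 < R → 0 < h → h < R →
      μ (ball z R \ ball z (R - h)) ≤ ENNReal.ofReal (K * (h / R) ^ δ) * μ (ball z R))
    (α β : ℝ) (hα : 0 < α) (hβ : 0 < β) (hαβ : α + β ≤ δ) :
    ∃ C > (0 : ℝ), ∀ (u : X → ℝ) (N : ℝ), 0 ≤ N →
      (∀ z : X, 0 ≤ u z) →
      (∀ z w : X, |u z - u w| ≤ N * dist z w ^ β) →
      (∀ (z : X) (s : ℝ), 0 < s → IntegrableOn u (ball z s) μ) →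
      ∀ (r : ℝ), 0 < r → ∀ (x y : X),
        |r ^ α * (⨍ z in ball x r, u z ∂μ) - r ^ α * ⨍ z in ball y r, u z ∂μ| ≤
          C * dist x y ^ (α + β) * N :=
  averaged_function_holder_estimate_general μ hball δ K hK hann α β hα hβ hαβ
end

section
/- Let X = (ℝ×{0}) ∪ ({0}×(−∞,1]) ⊂ ℝ² with metric d(x,y) = max{|x₁−y₁|, |x₂−y₂|} and 1-dimensional Hausdorff measure μ. Define u(x) = x₂ if 0 < x₂ ≤ 1 and u(x) = 0 otherwise. Then for 0 ≤ α ≤ 1, the noncentered fractional maximal function satisfies 𝓜̃_α u(0,0) ≤ 1/3 while 𝓜̃_α u(x) ≥ 1/2 whenever x₂ > 0; in particular 𝓜̃_α u is not continuous at the origin even though u is Lipschitz. -/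
open MeasureTheory Metric
open scoped ENNReal

/-- The cross-shaped set `X = (ℝ×{0}) ∪ ({0}×(−∞,1]) ⊂ ℝ²`, where `ℝ²` carries the
sup-metric (the product metric on `ℝ × ℝ`). -/
def Cross : Set (ℝ × ℝ) := {p | p.2 = 0 ∨ (p.1 = 0 ∧ p.2 ≤ 1)}

/-- The function `u(x) = x₂` if `0 < x₂ ≤ 1`, `u(x) = 0` otherwise. -/
noncomputable def uCross (p : Cross) : ℝ :=
  if 0 < (p : ℝ × ℝ).2 ∧ (p : ℝ × ℝ).2 ≤ 1 then (p : ℝ × ℝ).2 else 0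

/-- The noncentered fractional maximal function
`𝓜̃_α u(x) = sup_{B(z,r) ∋ x} r^α ⨍_{B(z,r)} |u| dμ`. -/
noncomputable def ncMax {X : Type*} [MetricSpace X] [MeasurableSpace X]
    (μ : Measure X) (α : ℝ) (u : X → ℝ) (x : X) : ℝ :=
  sSup {t : ℝ | ∃ (z : X) (r : ℝ), 0 < r ∧ x ∈ ball z r ∧
    t = r ^ α * ⨍ y in ball z r, |u y| ∂μ}

/-!
With respect to `μH[1]`, the cross is a horizontal line and a vertical ray, each carrying
Lebesgue measure, and `u` vanishes on the line. A ball `B(z, r)` containing the origin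
therefore contains a horizontal segment of length `2r`, and meets the part of the ray where
`u > 0` in an interval `(0, b)` (possibly closed at `b`) with `b ≤ min (2r) 1`. Its fractional
average is at most `max 1 r · (b² / 2) / (2r + b) ≤ 1/3`. On the other hand the ball of radius
`1` around `(0, 1)` misses the line, contains every point with `x₂ > 0`, and has fractional
average exactly `1/2`. These points accumulate at the origin.
-/

open Set

section ncMax

variable {X : Type*} [MetricSpace X] [MeasurableSpace X] {μ : Measure X} {α : ℝ} {u : X → ℝ}
  {x : X}

theorem ncMax_le {c : ℝ} (hc : 0 ≤ c)
    (h : ∀ z r, 0 < r → x ∈ ball z r → r ^ α * ⨍ y in ball z r, |u y| ∂μ ≤ c) :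
    ncMax μ α u x ≤ c :=
  Real.sSup_le (by rintro _ ⟨z, r, hr, hx, rfl⟩; exact h z r hr hx) hc

theorem le_ncMax {C : ℝ}
    (hC : ∀ z r, 0 < r → x ∈ ball z r → r ^ α * ⨍ y in ball z r, |u y| ∂μ ≤ C)
    {z : X} {r : ℝ} (hr : 0 < r) (hx : x ∈ ball z r) :
    r ^ α * ⨍ y in ball z r, |u y| ∂μ ≤ ncMax μ α u x :=
  le_csSup ⟨C, by rintro _ ⟨z, r, hr, hx, rfl⟩; exact hC z r hr hx⟩ ⟨z, r, hr, hx, rfl⟩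

end ncMax

theorem not_continuousAt_of_lt_of_forall_le {T : Type*} [TopologicalSpace T] {f : T → ℝ}
    {s : Set T} {x : T} {c : ℝ} (hx : x ∈ closure s) (hs : ∀ y ∈ s, c ≤ f y) (hfx : f x < c) :
    ¬ ContinuousAt f x := fun hf =>
  hfx.not_ge (continuousWithinAt_const.closure_le hx hf.continuousWithinAt hs)

theorem setAverage_le_of_norm_le {α : Type*} [MeasurableSpace α] {μ : Measure α} {s : Set α}
    {f : α → ℝ} {C : ℝ} (hC : 0 ≤ C) (hs : μ s ≠ ∞) (hf : ∀ x ∈ s, ‖f x‖ ≤ C) :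
    ⨍ x in s, f x ∂μ ≤ C := by
  rw [setAverage_eq, smul_eq_mul]
  rcases measureReal_nonneg.eq_or_lt with h | h
  · rw [← h, inv_zero, zero_mul]
    exact hC
  · rw [inv_mul_le_iff₀ h]
    have h_int := norm_setIntegral_le_of_norm_le_const (μ := μ) hs.lt_top hf
    rw [Real.norm_eq_abs] at h_int
    linarith [le_abs_self (∫ x in s, f x ∂μ)]

theorem setIntegral_Ioc_id {b : ℝ} (hb : 0 ≤ b) : ∫ t in Ioc 0 b, t = b ^ 2 / 2 := by
  rw [← intervalIntegral.integral_of_le hb, integral_id]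
  ring

theorem setIntegral_id_le_of_subset_Ioc {S : Set ℝ} {b : ℝ} (hb : 0 ≤ b) (hS : S ⊆ Ioc 0 b) :
    ∫ t in S, t ≤ b ^ 2 / 2 :=
  (setIntegral_mono_set continuous_id.integrableOn_Ioc
    ((ae_restrict_iff' measurableSet_Ioc).2 (ae_of_all _ fun _ ht => ht.1.le))
    hS.eventuallyLE).trans_eq (setIntegral_Ioc_id hb)

theorem Real.rpow_le_max_one_self {r α : ℝ} (hr : 0 ≤ r) (hα0 : 0 ≤ α) (hα1 : α ≤ 1) :
    r ^ α ≤ max 1 r := by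
  rcases le_total r 1 with h | h
  · exact (Real.rpow_le_one hr h hα0).trans (le_max_left _ _)
  · exact (Real.rpow_le_rpow_of_exponent_le h hα1).trans_eq (Real.rpow_one r) |>.trans
      (le_max_right _ _)

theorem hausdorffMeasure_one_of_subset_axes {E : Set (ℝ × ℝ)}
    (hE : E ⊆ {p | p.2 = 0} ∪ {p | p.1 = 0}) :
    μH[1] E = volume {t : ℝ | (t, 0) ∈ E} + volume {t : ℝ | (0, t) ∈ E} := by
  have h_horiz : volume {t : ℝ | (t, 0) ∈ E} = μH[1] (E ∩ {p | p.2 = 0}) := by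
    have hf : Isometry fun t : ℝ => (t, (0 : ℝ)) :=
      Isometry.of_dist_eq fun a b => by simp [Prod.dist_eq]
    have h_range : range (fun t : ℝ => (t, (0 : ℝ))) = {p | p.2 = 0} :=
      Set.ext fun p => ⟨by rintro ⟨t, rfl⟩; rfl, fun hp => ⟨p.1, Prod.ext rfl hp.symm⟩⟩
    rw [← hausdorffMeasure_real, ← h_range, ← hf.hausdorffMeasure_preimage (Or.inl zero_le_one)]
    rfl
  have h_vert : volume {t : ℝ | (0, t) ∈ E} = μH[1] (E ∩ {p | p.1 = 0}) := by
    have hf : Isometry fun t : ℝ => ((0 : ℝ), t) :=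
      Isometry.of_dist_eq fun a b => by simp [Prod.dist_eq]
    have h_range : range (fun t : ℝ => ((0 : ℝ), t)) = {p | p.1 = 0} :=
      Set.ext fun p => ⟨by rintro ⟨t, rfl⟩; rfl, fun hp => ⟨p.2, Prod.ext hp.symm rfl⟩⟩
    rw [← hausdorffMeasure_real, ← h_range, ← hf.hausdorffMeasure_preimage (Or.inl zero_le_one)]
    rfl
  have h_origin : μH[1] (E ∩ {p | p.1 = 0} ∩ {p | p.2 = 0}) = 0 := by
    have := Measure.nullSingletonClass_hausdorff (ℝ × ℝ) one_pos
    exact measure_mono_null (fun p hp => show p = 0 from Prod.ext hp.1.2 hp.2)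
      (measure_singleton (0 : ℝ × ℝ))
  have h_rest : E \ {p | p.2 = 0} = (E ∩ {p | p.1 = 0}) \ {p | p.2 = 0} :=
    Set.ext fun p => ⟨fun hp => ⟨⟨hp.1, (hE hp.1).resolve_left hp.2⟩, hp.2⟩,
      fun hp => ⟨hp.1.1, hp.2⟩⟩
  have h_axis : MeasurableSet {p : ℝ × ℝ | p.2 = 0} :=
    (isClosed_eq continuous_snd continuous_const).measurableSet
  rw [h_horiz, h_vert, ← measure_sdiff_null' h_origin, ← h_rest, measure_inter_add_sdiff E h_axis]

namespace Cross

def horiz (t : ℝ) : Cross := ⟨(t, 0), Or.inl rfl⟩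

-- Clamped at `1` only to make it total; `lengthMeasure` sees it on `Iic 1` alone.
noncomputable def vert (t : ℝ) : Cross := ⟨(0, min t 1), Or.inr ⟨rfl, min_le_right _ _⟩⟩

theorem coe_vert {t : ℝ} (ht : t ≤ 1) : (vert t : ℝ × ℝ) = (0, t) := by
  simp [vert, ht]

theorem continuous_horiz : Continuous horiz := by
  unfold horiz; fun_prop

theorem continuous_vert : Continuous vert := by
  unfold vert; fun_prop

noncomputable def lengthMeasure : Measure Cross :=
  volume.map horiz + (volume.restrict (Iic 1)).map vert

theorem lengthMeasure_apply {S : Set Cross} (hS : MeasurableSet S) :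
    lengthMeasure S = volume (horiz ⁻¹' S) + volume (vert ⁻¹' S ∩ Iic 1) := by
  rw [lengthMeasure, Measure.add_apply, Measure.map_apply continuous_horiz.measurable hS,
    Measure.map_apply continuous_vert.measurable hS,
    Measure.restrict_apply (continuous_vert.measurable hS)]

theorem hausdorffMeasure_eq_lengthMeasure : (μH[1] : Measure Cross) = lengthMeasure := by
  ext S hS
  have h_subset : Subtype.val '' S ⊆ {p | p.2 = 0} ∪ {p | p.1 = 0} := by
    rintro _ ⟨⟨p, hp | hp⟩, -, rfl⟩
    exacts [Or.inl hp, Or.inr hp.1]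
  have h_horiz : {t : ℝ | (t, 0) ∈ Subtype.val '' S} = horiz ⁻¹' S :=
    Set.ext fun t => ⟨fun ⟨p, hp, hpt⟩ => by
      rwa [mem_preimage, show horiz t = p from Subtype.ext hpt.symm], fun h => ⟨_, h, rfl⟩⟩
  have h_vert : {t : ℝ | (0, t) ∈ Subtype.val '' S} = vert ⁻¹' S ∩ Iic 1 := by
    ext t
    constructor
    · rintro ⟨p, hp, hpt⟩
      have ht : t ≤ 1 := by
        rcases p.2 with h | h
        · rw [hpt] at h; exact h.le.trans zero_le_one
        · rw [hpt] at h; exact h.2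
      have h_vert_t : vert t = p := Subtype.ext ((coe_vert ht).trans hpt.symm)
      exact ⟨by rwa [mem_preimage, h_vert_t], ht⟩
    · rintro ⟨hS, ht⟩
      exact ⟨vert t, hS, coe_vert ht⟩
  rw [← isometry_subtype_coe.hausdorffMeasure_image (Or.inl zero_le_one),
    hausdorffMeasure_one_of_subset_axes h_subset, h_horiz, h_vert, lengthMeasure_apply hS]

theorem dist_horiz (z : Cross) (t : ℝ) :
    dist (horiz t) z = max |t - (z : ℝ × ℝ).1| |(z : ℝ × ℝ).2| := by
  simp [Subtype.dist_eq, Prod.dist_eq, Real.dist_eq, horiz]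

theorem dist_vert (z : Cross) {t : ℝ} (ht : t ≤ 1) :
    dist (vert t) z = max |(z : ℝ × ℝ).1| |t - (z : ℝ × ℝ).2| := by
  rw [Subtype.dist_eq, Prod.dist_eq, coe_vert ht, Real.dist_eq, Real.dist_eq, zero_sub, abs_neg]

theorem horiz_preimage_ball_subset (z : Cross) (r : ℝ) :
    horiz ⁻¹' ball z r ⊆ Ioo ((z : ℝ × ℝ).1 - r) ((z : ℝ × ℝ).1 + r) := by
  intro t ht
  rw [mem_preimage, mem_ball, dist_horiz, max_lt_iff, abs_sub_lt_iff] at ht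
  constructor <;> linarith [ht.1.1, ht.1.2]

theorem horiz_preimage_ball {z : Cross} {r : ℝ} (hz : |(z : ℝ × ℝ).2| < r) :
    horiz ⁻¹' ball z r = Ioo ((z : ℝ × ℝ).1 - r) ((z : ℝ × ℝ).1 + r) := by
  refine (horiz_preimage_ball_subset z r).antisymm fun t ht => ?_
  rw [mem_preimage, mem_ball, dist_horiz, max_lt_iff, abs_sub_lt_iff]
  exact ⟨⟨by linarith [ht.2], by linarith [ht.1]⟩, hz⟩

theorem horiz_preimage_ball_eq_empty {z : Cross} {r : ℝ} (hz : r ≤ |(z : ℝ × ℝ).2|) :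
    horiz ⁻¹' ball z r = ∅ :=
  eq_empty_of_forall_notMem fun t ht =>
    (le_max_right _ _).not_gt ((dist_horiz z t).symm.trans_lt ht |>.trans_le hz)

theorem vert_preimage_ball_subset (z : Cross) (r : ℝ) :
    vert ⁻¹' ball z r ∩ Iic 1 ⊆ Ioo ((z : ℝ × ℝ).2 - r) ((z : ℝ × ℝ).2 + r) := by
  rintro t ⟨ht, ht1 : t ≤ 1⟩
  rw [mem_preimage, mem_ball, dist_vert z ht1, max_lt_iff, abs_sub_lt_iff] at ht
  constructor <;> linarith [ht.2.1, ht.2.2]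

theorem vert_preimage_ball {z : Cross} {r : ℝ} (hz : |(z : ℝ × ℝ).1| < r) :
    vert ⁻¹' ball z r ∩ Iic 1 = Ioo ((z : ℝ × ℝ).2 - r) ((z : ℝ × ℝ).2 + r) ∩ Iic 1 := by
  refine subset_antisymm (subset_inter (vert_preimage_ball_subset z r) inter_subset_right) ?_
  rintro t ⟨ht, ht1 : t ≤ 1⟩
  refine ⟨?_, ht1⟩
  rw [mem_preimage, mem_ball, dist_vert z ht1, max_lt_iff, abs_sub_lt_iff]
  exact ⟨hz, by linarith [ht.2], by linarith [ht.1]⟩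

theorem setIntegral_lengthMeasure {f : Cross → ℝ} {S : Set Cross} (hS : MeasurableSet S)
    (hf : IntegrableOn f S lengthMeasure) :
    ∫ y in S, f y ∂lengthMeasure =
      (∫ t in horiz ⁻¹' S, f (horiz t)) + ∫ t in vert ⁻¹' S ∩ Iic 1, f (vert t) := by
  have h_horiz : IntegrableOn f S (volume.map horiz) :=
    hf.mono_measure (Measure.le_add_right le_rfl)
  have h_vert : IntegrableOn f S ((volume.restrict (Iic 1)).map vert) :=
    hf.mono_measure (Measure.le_add_left le_rfl)
  rw [IntegrableOn, Measure.restrict_map continuous_horiz.measurable hS] at h_horiz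
  rw [IntegrableOn, Measure.restrict_map continuous_vert.measurable hS] at h_vert
  rw [lengthMeasure, Measure.restrict_add, Measure.restrict_map continuous_horiz.measurable hS,
    Measure.restrict_map continuous_vert.measurable hS, integral_add_measure h_horiz h_vert,
    integral_map continuous_horiz.aemeasurable h_horiz.aestronglyMeasurable,
    integral_map continuous_vert.aemeasurable h_vert.aestronglyMeasurable,
    Measure.restrict_restrict (continuous_vert.measurable hS)]

theorem uCross_horiz (t : ℝ) : uCross (horiz t) = 0 := by
  simp [uCross, horiz]

theorem uCross_vert {t : ℝ} (ht : t ≤ 1) : uCross (vert t) = (Ioi 0).indicator id t := by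
  by_cases h : 0 < t <;> simp [uCross, coe_vert ht, h, ht]

theorem measurable_uCross : Measurable uCross := by
  have h_snd : Measurable fun p : Cross => (p : ℝ × ℝ).2 := by fun_prop
  exact Measurable.ite ((measurableSet_lt measurable_const h_snd).inter
    (measurableSet_le h_snd measurable_const)) h_snd measurable_const

theorem abs_uCross_le_one (p : Cross) : |uCross p| ≤ 1 := by
  unfold uCross
  split_ifs with h
  · exact (abs_of_pos h.1).trans_le h.2
  · simp

theorem setIntegral_abs_uCross {S : Set Cross} (hS : MeasurableSet S)
    (hS_fin : lengthMeasure S ≠ ∞) :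
    ∫ y in S, |uCross y| ∂lengthMeasure = ∫ t in vert ⁻¹' S ∩ Iic 1 ∩ Ioi 0, t := by
  have h_int : IntegrableOn (fun y => |uCross y|) S lengthMeasure :=
    Measure.integrableOn_of_bounded hS_fin measurable_uCross.abs.aestronglyMeasurable
      (M := 1) (ae_of_all _ fun p => by simpa using abs_uCross_le_one p)
  have h_vert : MeasurableSet (vert ⁻¹' S ∩ Iic 1) :=
    (continuous_vert.measurable hS).inter measurableSet_Iic
  rw [setIntegral_lengthMeasure hS h_int, ← setIntegral_indicator measurableSet_Ioi]
  simp only [uCross_horiz, abs_zero, integral_zero, zero_add]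
  refine setIntegral_congr_fun h_vert fun t ht => ?_
  rw [uCross_vert ht.2]
  exact abs_of_nonneg (indicator_nonneg (fun x (hx : x ∈ Ioi (0 : ℝ)) => le_of_lt hx) t)

theorem lengthMeasure_ball_ne_top (z : Cross) (r : ℝ) : lengthMeasure (ball z r) ≠ ∞ := by
  rw [lengthMeasure_apply measurableSet_ball]
  exact ENNReal.add_ne_top.2
    ⟨ne_top_of_le_ne_top measure_Ioo_lt_top.ne (measure_mono (horiz_preimage_ball_subset z r)),
      ne_top_of_le_ne_top measure_Ioo_lt_top.ne (measure_mono (vert_preimage_ball_subset z r))⟩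

theorem le_lengthMeasure_ball (z : Cross) {r : ℝ} (hr : 0 < r) :
    r ≤ lengthMeasure.real (ball z r) := by
  suffices ENNReal.ofReal r ≤ lengthMeasure (ball z r) by
    simpa [Measure.real, hr.le] using ENNReal.toReal_mono (lengthMeasure_ball_ne_top z r) this
  rw [lengthMeasure_apply measurableSet_ball]
  rcases z.2 with hz | hz
  · refine le_add_right ?_
    rw [horiz_preimage_ball (by rwa [hz, abs_zero]), Real.volume_Ioo]
    exact ENNReal.ofReal_le_ofReal (by linarith)
  · refine le_add_left ?_
    have h_sub : Ioo ((z : ℝ × ℝ).2 - r) (z : ℝ × ℝ).2 ⊆ vert ⁻¹' ball z r ∩ Iic 1 := by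
      rw [vert_preimage_ball (by rwa [hz.1, abs_zero])]
      exact fun t ht => ⟨⟨ht.1, by linarith [ht.2]⟩, (ht.2.trans_le hz.2).le⟩
    calc ENNReal.ofReal r = volume (Ioo ((z : ℝ × ℝ).2 - r) (z : ℝ × ℝ).2) := by
          rw [Real.volume_Ioo, sub_sub_cancel]
      _ ≤ _ := measure_mono h_sub

theorem setIntegral_abs_uCross_ball_le_half (z : Cross) (r : ℝ) :
    ∫ y in ball z r, |uCross y| ∂lengthMeasure ≤ 1 / 2 := by
  rw [setIntegral_abs_uCross measurableSet_ball (lengthMeasure_ball_ne_top z r)]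
  simpa using setIntegral_id_le_of_subset_Ioc zero_le_one fun t ht => ⟨ht.2, ht.1.2⟩

theorem rpow_mul_setAverage_le_third {α : ℝ} (hα0 : 0 ≤ α) (hα1 : α ≤ 1) {z : Cross} {r : ℝ}
    (hr : 0 < r) (hz : (⟨(0, 0), Or.inl rfl⟩ : Cross) ∈ ball z r) :
    r ^ α * ⨍ y in ball z r, |uCross y| ∂lengthMeasure ≤ 1 / 3 := by
  rw [mem_ball', Subtype.dist_eq, Prod.dist_eq, max_lt_iff] at hz
  simp only [Real.dist_eq, sub_zero] at hz
  obtain ⟨hz₁, hz₂⟩ := hz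
  set b := min ((z : ℝ × ℝ).2 + r) 1
  have hb0 : 0 < b := lt_min (by linarith [neg_abs_le (z : ℝ × ℝ).2]) one_pos
  have hb1 : b ≤ 1 := min_le_right _ _
  have hb2 : b ≤ 2 * r := (min_le_left _ _).trans (by linarith [le_abs_self (z : ℝ × ℝ).2])
  have h_mass : 2 * r + b ≤ lengthMeasure.real (ball z r) := by
    have h_sub : Ioo 0 b ⊆ vert ⁻¹' ball z r ∩ Iic 1 := by
      rw [vert_preimage_ball hz₁]
      intro t ht
      have := le_abs_self (z : ℝ × ℝ).2
      exact ⟨⟨by linarith [ht.1], ht.2.trans_le (min_le_left _ _)⟩,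
        (ht.2.trans_le hb1).le⟩
    refine (ENNReal.ofReal_le_iff_le_toReal (lengthMeasure_ball_ne_top z r)).1 ?_
    rw [ENNReal.ofReal_add (by positivity) hb0.le, lengthMeasure_apply measurableSet_ball,
      horiz_preimage_ball hz₂, Real.volume_Ioo, ← sub_zero b, ← Real.volume_Ioo]
    gcongr
    linarith
  have h_int : ∫ y in ball z r, |uCross y| ∂lengthMeasure ≤ b ^ 2 / 2 := by
    rw [setIntegral_abs_uCross measurableSet_ball (lengthMeasure_ball_ne_top z r)]
    refine setIntegral_id_le_of_subset_Ioc hb0.le fun t ht => ⟨ht.2, le_min ?_ ht.1.2⟩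
    exact (vert_preimage_ball_subset z r ht.1).2.le
  have h_int0 : 0 ≤ ∫ y in ball z r, |uCross y| ∂lengthMeasure :=
    integral_nonneg fun _ => abs_nonneg _
  rw [setAverage_eq, smul_eq_mul]
  calc r ^ α * ((lengthMeasure.real (ball z r))⁻¹ * ∫ y in ball z r, |uCross y| ∂lengthMeasure)
      ≤ max 1 r * ((2 * r + b)⁻¹ * (b ^ 2 / 2)) := by
        gcongr
        exact Real.rpow_le_max_one_self hr.le hα0 hα1
    _ = max 1 r * (b ^ 2 / 2) / (2 * r + b) := by ring
    _ ≤ 1 / 3 := by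
        have hb_sq : b ^ 2 ≤ b := by nlinarith
        rw [div_le_iff₀ (by positivity)]
        rcases le_total r 1 with h | h
        · rw [max_eq_left h]; linarith
        · rw [max_eq_right h]; nlinarith [mul_le_mul_of_nonneg_left hb_sq hr.le]

theorem rpow_mul_setAverage_le_one {α : ℝ} (hα0 : 0 ≤ α) (hα1 : α ≤ 1) (z : Cross) {r : ℝ}
    (hr : 0 < r) : r ^ α * ⨍ y in ball z r, |uCross y| ∂lengthMeasure ≤ 1 := by
  have h_avg0 : 0 ≤ ⨍ y in ball z r, |uCross y| ∂lengthMeasure := by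
    rw [setAverage_eq, smul_eq_mul]
    exact mul_nonneg (inv_nonneg.2 measureReal_nonneg) (integral_nonneg fun _ => abs_nonneg _)
  rcases le_total r 1 with h | h
  · refine mul_le_one₀ (Real.rpow_le_one hr.le h hα0) h_avg0 ?_
    exact setAverage_le_of_norm_le zero_le_one (lengthMeasure_ball_ne_top z r)
      fun p _ => by simpa using abs_uCross_le_one p
  · have h_mass := le_lengthMeasure_ball z hr
    calc r ^ α * ⨍ y in ball z r, |uCross y| ∂lengthMeasure
        ≤ r * ((lengthMeasure.real (ball z r))⁻¹ * (1 / 2)) := by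
          rw [setAverage_eq, smul_eq_mul]
          gcongr
          · exact (Real.rpow_le_rpow_of_exponent_le h hα1).trans_eq (Real.rpow_one r)
          · exact setIntegral_abs_uCross_ball_le_half z r
      _ ≤ r * (r⁻¹ * (1 / 2)) := by gcongr
      _ ≤ 1 := by rw [mul_inv_cancel_left₀ hr.ne']; norm_num

theorem setAverage_abs_uCross_ball_vert_one :
    ⨍ y in ball (vert 1) 1, |uCross y| ∂lengthMeasure = 1 / 2 := by
  have h_vert : (vert 1 : ℝ × ℝ) = (0, 1) := coe_vert le_rfl
  have h_V : vert ⁻¹' ball (vert 1) 1 ∩ Iic 1 = Ioc 0 1 := by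
    rw [vert_preimage_ball (by simp [h_vert]), h_vert]
    ext t
    simp only [mem_inter_iff, mem_Ioo, mem_Iic, mem_Ioc]
    constructor
    · rintro ⟨⟨h0, -⟩, h1⟩; exact ⟨by linarith, h1⟩
    · rintro ⟨h0, h1⟩; exact ⟨⟨by linarith, by linarith⟩, h1⟩
  have h_mass : lengthMeasure (ball (vert 1) 1) = 1 := by
    rw [lengthMeasure_apply measurableSet_ball, horiz_preimage_ball_eq_empty (by simp [h_vert]),
      h_V]
    simp
  rw [setAverage_eq, measureReal_def, h_mass, ENNReal.toReal_one, inv_one, one_smul,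
    setIntegral_abs_uCross measurableSet_ball (by simp [h_mass]), h_V,
    inter_eq_left.2 Ioc_subset_Ioi_self, setIntegral_Ioc_id zero_le_one]
  norm_num

theorem mem_ball_vert_one {x : Cross} (hx : 0 < (x : ℝ × ℝ).2) : x ∈ ball (vert 1) 1 := by
  rcases x.2 with hx₂ | ⟨hx₁, hx₂⟩
  · exact absurd hx₂ hx.ne'
  · rw [mem_ball, Subtype.dist_eq, coe_vert le_rfl, Prod.dist_eq, max_lt_iff, Real.dist_eq,
      Real.dist_eq, hx₁, sub_zero, abs_zero, abs_sub_lt_iff]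
    exact ⟨one_pos, by linarith, by linarith⟩

theorem origin_mem_closure :
    (⟨(0, 0), Or.inl rfl⟩ : Cross) ∈ closure {x : Cross | 0 < (x : ℝ × ℝ).2} := by
  have h_origin : vert 0 = ⟨(0, 0), Or.inl rfl⟩ := Subtype.ext (coe_vert zero_le_one)
  rw [← h_origin]
  refine map_mem_closure (s := Ioi 0) continuous_vert (by simp [closure_Ioi]) fun t ht => ?_
  exact lt_min (mem_Ioi.1 ht) one_pos

end Cross

/-- On the cross `X` with the 1-dimensional Hausdorff measure, for
`0 ≤ α ≤ 1` the noncentered fractional maximal function of the Lipschitz function `u`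
satisfies `𝓜̃_α u(0,0) ≤ 1/3` while `𝓜̃_α u(x) ≥ 1/2` whenever `x₂ > 0`; in
particular `𝓜̃_α u` is not continuous at the origin. -/
theorem noncentered_frMax_discontinuous
    (α : ℝ) (hα0 : 0 ≤ α) (hα1 : α ≤ 1) :
    ncMax (μH[1] : Measure Cross) α uCross ⟨(0, 0), Or.inl rfl⟩ ≤ 1 / 3 ∧
    (∀ x : Cross, 0 < (x : ℝ × ℝ).2 →
      1 / 2 ≤ ncMax (μH[1] : Measure Cross) α uCross x) ∧
    ¬ ContinuousAt (ncMax (μH[1] : Measure Cross) α uCross) ⟨(0, 0), Or.inl rfl⟩ := by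
  rw [Cross.hausdorffMeasure_eq_lengthMeasure]
  have h_origin : ncMax Cross.lengthMeasure α uCross ⟨(0, 0), Or.inl rfl⟩ ≤ 1 / 3 :=
    ncMax_le (by norm_num) fun _ _ hr hx => Cross.rpow_mul_setAverage_le_third hα0 hα1 hr hx
  have h_pos (x : Cross) (hx : 0 < (x : ℝ × ℝ).2) :
      1 / 2 ≤ ncMax Cross.lengthMeasure α uCross x := by
    have h := le_ncMax (fun z _ hr _ => Cross.rpow_mul_setAverage_le_one hα0 hα1 z hr) one_pos
      (Cross.mem_ball_vert_one hx)
    rwa [Real.one_rpow, one_mul, Cross.setAverage_abs_uCross_ball_vert_one] at h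
  exact ⟨h_origin, h_pos, not_continuousAt_of_lt_of_forall_le Cross.origin_mem_closure h_pos
    (h_origin.trans_lt (by norm_num))⟩
end
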